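/- For any X ⊆ ℕ, the right Cayley graph of the monoid M(X) = ⟨a,b,c,d,e | a bⁱ c = a bⁱ d (i ∈ X), a bʲ c = a bʲ e (j ∉ X)⟩ with respect to {a,b,c,d,e} is a directed rooted tree (rooted at the identity) in which every vertex has in-degree at most 1 and out-degree either 4 or 5; specifically, if the normal form of an element ends in a bⁱ for some i ≥ 0 then it has out-degree 4 (its successors being those by a, b, d, e), and otherwise it has out-degree 5. -/

import Mathlib

/-- The element of the monoid `M` represented by the word `w` over the alphabet `A`,
where `f : A → M` interprets the letters. -/
def wordProd {A M : Type*} [Monoid M] (f : A → M) (w : List A) : M := (w.map f).prod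

/-- One application of a defining relation from `R`: replace a factor `s` by `t`
where `(s, t) ∈ R` or `(t, s) ∈ R`. -/
def OneStep {A : Type*} (R : Set (List A × List A)) (w w' : List A) : Prop :=
  ∃ u s t v : List A, ((s, t) ∈ R ∨ (t, s) ∈ R) ∧ w = u ++ s ++ v ∧ w' = u ++ t ++ v

/-- `⟨A | R⟩` (via `f : A → M`) is a presentation of `M`: `f` generates `M` (every element
is represented by a word) and two words represent the same element of `M` exactly when
they are related by the congruence generated by `R`. -/
def Presents {A M : Type*} [Monoid M] (f : A → M) (R : Set (List A × List A)) : Prop :=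
  Function.Surjective (wordProd f) ∧
    ∀ u v : List A, Relation.ReflTransGen (OneStep R) u v ↔ wordProd f u = wordProd f v

/-- An atomic homotopy in the directed 2-complex `K_n` of the right Cayley graph of `M`
over `A`: a path in the Cayley graph starting at `x` and labelled `u ++ s ++ v` is replaced
by the path labelled `u ++ t ++ v`, where the subpaths labelled `s` and `t` starting at the
vertex `x * (u)` are parallel (same endpoints) and `|s| + |t| ≤ n`, i.e. they form a
2-cell of `K_n`. -/
def KStep {A M : Type*} [Monoid M] (f : A → M) (n : ℕ) (p q : M × List A) : Prop :=
  ∃ (x : M) (u s t v : List A),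
    p = (x, u ++ s ++ v) ∧ q = (x, u ++ t ++ v) ∧
    x * wordProd f u * wordProd f s = x * wordProd f u * wordProd f t ∧
    s.length + t.length ≤ n

/-- Two paths in the right Cayley graph (given as a start vertex together with a label
word over `A`) are homotopic in `K_n` if one can be transformed into the other by a finite
sequence of 2-cell replacements. -/
def Homotopic {A M : Type*} [Monoid M] (f : A → M) (n : ℕ) :
    M × List A → M × List A → Prop :=
  Relation.ReflTransGen (KStep f n)

/-- The right Cayley graph of `M` over `A` is `n`-quasi-simply-connected: every pair of
parallel paths (same start vertex `x`, same end vertex) is homotopic in `K_n`. -/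
def NQSC {A M : Type*} [Monoid M] (f : A → M) (n : ℕ) : Prop :=
  ∀ (x : M) (w₁ w₂ : List A), x * wordProd f w₁ = x * wordProd f w₂ →
    Homotopic f n (x, w₁) (x, w₂)

/-! The monoids `M(X)`. The alphabet `{a, b, c, d, e}` is modelled by `Fin 5`, with
`a = 0`, `b = 1`, `c = 2`, `d = 3`, `e = 4`. -/

/-- The word `a bⁱ c`. -/
def wABC (i : ℕ) : List (Fin 5) := 0 :: (List.replicate i 1 ++ [2])

/-- The word `a bⁱ d`. -/
def wABD (i : ℕ) : List (Fin 5) := 0 :: (List.replicate i 1 ++ [3])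

/-- The word `a bⁱ e`. -/
def wABE (i : ℕ) : List (Fin 5) := 0 :: (List.replicate i 1 ++ [4])

/-- The defining relations of `M(X)`:
`a bⁱ c = a bⁱ d` for `i ∈ X` and `a bʲ c = a bʲ e` for `j ∉ X`. -/
def MXRel (X : Set ℕ) : Set (List (Fin 5) × List (Fin 5)) :=
  {p | ∃ i : ℕ, (i ∈ X ∧ p = (wABC i, wABD i)) ∨ (i ∉ X ∧ p = (wABC i, wABE i))}

/-- One step of the rewriting system for `M(X)`:
`a bⁱ c → a bⁱ d` for `i ∈ X`, and `a bʲ c → a bʲ e` for `j ∉ X`. -/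
def RWStep (X : Set ℕ) (w w' : List (Fin 5)) : Prop :=
  ∃ (u v : List (Fin 5)) (i : ℕ),
    (i ∈ X ∧ w = u ++ wABC i ++ v ∧ w' = u ++ wABD i ++ v) ∨
    (i ∉ X ∧ w = u ++ wABC i ++ v ∧ w' = u ++ wABE i ++ v)

/-- The normal forms: words over `{a,b,c,d,e}` containing no factor `a bⁱ c`. -/
def MXNormal (w : List (Fin 5)) : Prop :=
  ¬∃ (u v : List (Fin 5)) (i : ℕ), w = u ++ wABC i ++ v


/-!
A left-to-right transducer computes the normal forms of `M(X)`. Reading a word, it remembers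
whether what it has read so far ends in `a bⁱ` (state `some i`) or not (state `none`), and it
copies every letter except a `c` read in state `some i`, which it replaces by `d` or `e`
according to whether `i ∈ X`. Its output is invariant under the defining relations and
represents the same element as its input, so two words are equal in `M(X)` exactly when their
outputs agree. Appending a letter `g` to a word appends a single letter to the output, namely `g`
except that `c` turns into `d` or `e` after `a bⁱ`. Hence `x g` determines `x` and is never `1`,
and the successors of `x` correspond to the possible output letters: `a, b, d, e` when `x` ends
in `a bⁱ`, all five letters otherwise.
-/

lemma wordProd_append {A M : Type*} [Monoid M] (f : A → M) (u v : List A) :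
    wordProd f (u ++ v) = wordProd f u * wordProd f v := by
  simp [wordProd]

lemma wordProd_nil {A M : Type*} [Monoid M] (f : A → M) : wordProd f [] = 1 := rfl

lemma wordProd_cons {A M : Type*} [Monoid M] (f : A → M) (g : A) (w : List A) :
    wordProd f (g :: w) = f g * wordProd f w := by
  simp [wordProd]

lemma wordProd_singleton {A M : Type*} [Monoid M] (f : A → M) (g : A) :
    wordProd f [g] = f g := by
  simp [wordProd]

lemma Presents.wordProd_eq_of_mem {A M : Type*} [Monoid M] {f : A → M}
    {R : Set (List A × List A)} (hpres : Presents f R) {s t : List A} (h : (s, t) ∈ R) :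
    wordProd f s = wordProd f t :=
  (hpres.2 s t).1 <| .single ⟨[], s, t, [], .inl h, by simp, by simp⟩

namespace MX

def next (st : Option ℕ) (g : Fin 5) : Option ℕ :=
  if g = 0 then some 0 else if g = 1 then st.map (· + 1) else none

open Classical in
noncomputable def out (X : Set ℕ) (st : Option ℕ) (g : Fin 5) : Fin 5 :=
  match st with
  | some i => if g = 2 then (if i ∈ X then 3 else 4) else g
  | none => g

noncomputable def nf (X : Set ℕ) : Option ℕ → List (Fin 5) → List (Fin 5)
  | _, [] => []
  | st, g :: w => out X st g :: nf X (next st g) w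

def state (st : Option ℕ) (w : List (Fin 5)) : Option ℕ :=
  w.foldl next st

/-- The suffix `a bⁱ` that the state `some i` records. -/
def stateWord : Option ℕ → List (Fin 5)
  | none => []
  | some i => 0 :: List.replicate i 1

variable (X : Set ℕ)

@[simp] lemma nf_nil (st : Option ℕ) : nf X st [] = [] := rfl

@[simp] lemma nf_cons (st : Option ℕ) (g : Fin 5) (w : List (Fin 5)) :
    nf X st (g :: w) = out X st g :: nf X (next st g) w := rfl

@[simp] lemma state_nil (st : Option ℕ) : state st [] = st := rfl

@[simp] lemma state_cons (st : Option ℕ) (g : Fin 5) (w : List (Fin 5)) :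
    state st (g :: w) = state (next st g) w := rfl

lemma state_append (st : Option ℕ) (u v : List (Fin 5)) :
    state st (u ++ v) = state (state st u) v :=
  List.foldl_append

lemma nf_append (st : Option ℕ) (u v : List (Fin 5)) :
    nf X st (u ++ v) = nf X st u ++ nf X (state st u) v := by
  induction u generalizing st with
  | nil => rfl
  | cons g u ih => simp [ih]

lemma range_out_none : Set.range (out X none) = Set.univ :=
  Set.range_id

lemma out_of_ne_two (st : Option ℕ) {g : Fin 5} (hg : g ≠ 2) : out X st g = g := by
  cases st <;> simp [out, hg]

lemma out_out (st : Option ℕ) (g : Fin 5) : out X st (out X st g) = out X st g := by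
  cases st with
  | none => rfl
  | some i => unfold out; split_ifs <;> simp_all

lemma range_out_some (i : ℕ) : Set.range (out X (some i)) = {0, 1, 3, 4} := by
  ext g
  simp only [Set.mem_range, Set.mem_insert_iff, Set.mem_singleton_iff, out]
  fin_cases g <;> by_cases hi : i ∈ X <;> simp [hi, Fin.exists_fin_succ]

lemma state_replicate_one (k j : ℕ) : state (some k) (List.replicate j 1) = some (k + j) := by
  induction j generalizing k with
  | zero => rfl
  | succ j ih => simp [List.replicate_succ, next, ih, Nat.add_right_comm k 1 j, Nat.add_assoc]

lemma nf_replicate_one_append (k j : ℕ) (v : List (Fin 5)) :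
    nf X (some k) (List.replicate j 1 ++ v) = List.replicate j 1 ++ nf X (some (k + j)) v := by
  rw [nf_append, state_replicate_one]
  congr 1
  induction j generalizing k with
  | zero => rfl
  | succ j ih => simp [List.replicate_succ, next, out_of_ne_two, ih]

lemma state_zero_replicate_one (st : Option ℕ) (j : ℕ) :
    state st (0 :: List.replicate j 1) = some j := by
  simp [next, state_replicate_one]

lemma nf_zero_replicate_one_append (st : Option ℕ) (j : ℕ) (v : List (Fin 5)) :
    nf X st (0 :: (List.replicate j 1 ++ v)) = 0 :: (List.replicate j 1 ++ nf X (some j) v) := by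
  simp [next, out_of_ne_two, nf_replicate_one_append]

lemma nf_eq_and_state_eq_of_mem_MXRel {s t : List (Fin 5)} (h : (s, t) ∈ MXRel X)
    (st : Option ℕ) : nf X st s = nf X st t ∧ state st s = state st t := by
  have hnf (i : ℕ) (g : Fin 5) : nf X st (0 :: (List.replicate i 1 ++ [g])) =
      0 :: (List.replicate i 1 ++ [out X (some i) g]) := by
    rw [nf_zero_replicate_one_append]; rfl
  have hstate (i : ℕ) (g : Fin 5) :
      state st (0 :: (List.replicate i 1 ++ [g])) = next (some i) g := by
    rw [← List.cons_append, state_append, state_zero_replicate_one]; rfl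
  obtain ⟨i, ⟨hi, hst⟩ | ⟨hi, hst⟩⟩ := h <;> cases hst <;>
    simp only [wABC, wABD, wABE, hnf, hstate] <;> simp [out, next, hi]

lemma nf_eq_of_oneStep {w w' : List (Fin 5)} (h : OneStep (MXRel X) w w') (st : Option ℕ) :
    nf X st w = nf X st w' := by
  obtain ⟨u, s, t, v, hR, rfl, rfl⟩ := h
  have hst : ∀ st, nf X st s = nf X st t ∧ state st s = state st t := fun st =>
    hR.elim (nf_eq_and_state_eq_of_mem_MXRel X · st)
      fun h => (nf_eq_and_state_eq_of_mem_MXRel X h st).imp Eq.symm Eq.symm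
  simp only [nf_append, state_append, (hst _).1, (hst _).2]

lemma stateWord_next_suffix (st : Option ℕ) (g : Fin 5) :
    stateWord (next st g) <:+ stateWord st ++ [out X st g] := by
  unfold next
  split_ifs with h0 h1
  · cases st <;> simp [stateWord, out, h0]
  · cases st <;> simp [stateWord, out, h1, List.replicate_succ']
  · exact List.nil_suffix

lemma state_eq_some_iff (w : List (Fin 5)) (i : ℕ) :
    state none w = some i ↔ ∃ u, w = u ++ 0 :: List.replicate i 1 := by
  constructor
  · induction w using List.reverseRecOn generalizing i with
    | nil => simp
    | append_singleton w g ih =>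
      rw [state_append, state_cons, state_nil, next]
      split_ifs with h0 h1
      · rintro ⟨rfl⟩; exact ⟨w, by simp [h0]⟩
      · cases hw : state none w with
        | none => simp
        | some j =>
          rintro ⟨rfl⟩
          obtain ⟨u, rfl⟩ := ih j hw
          exact ⟨u, by simp [h1, List.replicate_succ']⟩
      · simp
  · rintro ⟨u, rfl⟩
    rw [state_append, state_zero_replicate_one]

lemma nf_append_singleton (w : List (Fin 5)) (g : Fin 5) :
    nf X none (w ++ [g]) = nf X none w ++ [out X (state none w) g] := by
  rw [nf_append]; rfl

section Presentation

variable {X} {M : Type*} [Monoid M] {f : Fin 5 → M} (hpres : Presents f (MXRel X))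
include hpres

lemma wordProd_stateWord_append_out (st : Option ℕ) (g : Fin 5) :
    wordProd f (stateWord st ++ [out X st g]) = wordProd f (stateWord st ++ [g]) := by
  rcases st with _ | i
  · rfl
  by_cases hg : g = 2
  · subst hg
    by_cases hi : i ∈ X
    · simpa [out, hi, stateWord, wABC, wABD] using
        (hpres.wordProd_eq_of_mem ⟨i, .inl ⟨hi, rfl⟩⟩).symm
    · simpa [out, hi, stateWord, wABC, wABE] using
        (hpres.wordProd_eq_of_mem ⟨i, .inr ⟨hi, rfl⟩⟩).symm
  · rw [out_of_ne_two X _ hg]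

lemma wordProd_stateWord_append_nf (st : Option ℕ) (w : List (Fin 5)) :
    wordProd f (stateWord st ++ nf X st w) = wordProd f (stateWord st ++ w) := by
  induction w generalizing st with
  | nil => rfl
  | cons g w ih =>
    obtain ⟨p, hp⟩ := stateWord_next_suffix X st g
    calc wordProd f (stateWord st ++ nf X st (g :: w))
        = wordProd f (stateWord st ++ [out X st g]) * wordProd f (nf X (next st g) w) := by
          simp only [nf_cons, wordProd_append, wordProd_cons, wordProd_nil, one_mul, mul_assoc]
      _ = wordProd f p * wordProd f (stateWord (next st g) ++ nf X (next st g) w) := by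
          simp only [← hp, wordProd_append, mul_assoc]
      _ = wordProd f (stateWord st ++ [g]) * wordProd f w := by
          rw [ih, ← wordProd_stateWord_append_out hpres, ← hp]
          simp only [wordProd_append, mul_assoc]
      _ = wordProd f (stateWord st ++ g :: w) := by
          simp only [wordProd_append, wordProd_cons, wordProd_nil, one_mul, mul_assoc]

theorem wordProd_eq_iff_nf_eq (u v : List (Fin 5)) :
    wordProd f u = wordProd f v ↔ nf X none u = nf X none v := by
  refine ⟨fun h => ?_, fun h => ?_⟩
  · have hrel := (hpres.2 u v).2 h
    clear h
    induction hrel with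
    | refl => rfl
    | tail _ hstep ih => exact ih.trans (nf_eq_of_oneStep X hstep none)
  · have hu := wordProd_stateWord_append_nf hpres none u
    have hv := wordProd_stateWord_append_nf hpres none v
    simp only [stateWord, List.nil_append, h] at hu hv
    exact hu.symm.trans hv

lemma mul_eq_mul_iff_out_eq (w : List (Fin 5)) (g g' : Fin 5) :
    wordProd f w * f g = wordProd f w * f g' ↔
      out X (state none w) g = out X (state none w) g' := by
  simp only [← wordProd_singleton f, ← wordProd_append, wordProd_eq_iff_nf_eq hpres,
    nf_append_singleton, List.append_cancel_left_eq, List.singleton_inj]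

lemma eq_of_mul_eq_mul {x₁ x₂ : M} {g₁ g₂ : Fin 5} (h : x₁ * f g₁ = x₂ * f g₂) :
    x₁ = x₂ := by
  obtain ⟨w₁, rfl⟩ := hpres.1 x₁
  obtain ⟨w₂, rfl⟩ := hpres.1 x₂
  rw [← wordProd_singleton f, ← wordProd_singleton f, ← wordProd_append, ← wordProd_append,
    wordProd_eq_iff_nf_eq hpres, nf_append_singleton, nf_append_singleton] at h
  exact (wordProd_eq_iff_nf_eq hpres _ _).2 (List.append_inj_left' h rfl)

lemma mul_ne_one (x : M) (g : Fin 5) : x * f g ≠ 1 := by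
  obtain ⟨w, rfl⟩ := hpres.1 x
  rw [← wordProd_singleton f, ← wordProd_append, ← wordProd_nil f, ne_eq,
    wordProd_eq_iff_nf_eq hpres, nf_append_singleton]
  simp

lemma range_mul_eq_image_range_out (w : List (Fin 5)) :
    Set.range (wordProd f w * f ·) =
      (wordProd f w * f ·) '' Set.range (out X (state none w)) := by
  rw [← Set.range_comp]
  congr 1
  ext g
  exact (mul_eq_mul_iff_out_eq hpres w _ _).2 (out_out X _ g).symm

lemma ncard_range_mul (w : List (Fin 5)) :
    (Set.range (wordProd f w * f ·)).ncard = (Set.range (out X (state none w))).ncard := by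
  rw [range_mul_eq_image_range_out hpres, Set.InjOn.ncard_image]
  rintro _ ⟨a, rfl⟩ _ ⟨b, rfl⟩ h
  simpa only [out_out] using (mul_eq_mul_iff_out_eq hpres w _ _).1 h

end Presentation

end MX

/-- The right Cayley graph of `M(X)` over `{a,b,c,d,e}` is a directed rooted tree rooted at
the identity: every vertex is reachable from the identity; every vertex has in-degree at
most 1 (edges with the same target have the same source) and the identity has no incoming
edge; and every vertex has out-degree 4 or 5: if the normal form of the vertex ends in
`a bⁱ` for some `i ≥ 0` then its distinct successors are exactly those by `a, b, d, e`
(out-degree 4), and otherwise it has 5 distinct successors. -/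
theorem stmt_16 (X : Set ℕ) {M : Type} [Monoid M] (f : Fin 5 → M)
    (hpres : Presents f (MXRel X)) :
    (∀ x : M, ∃ w : List (Fin 5), wordProd f w = x) ∧
    (∀ (x₁ x₂ : M) (g₁ g₂ : Fin 5), x₁ * f g₁ = x₂ * f g₂ → x₁ = x₂) ∧
    (∀ (x : M) (g : Fin 5), x * f g ≠ 1) ∧
    (∀ (x : M) (w : List (Fin 5)), MXNormal w → wordProd f w = x →
      ((∃ (u : List (Fin 5)) (i : ℕ), w = u ++ (0 : Fin 5) :: List.replicate i (1 : Fin 5)) →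
        (Set.range fun g : Fin 5 => x * f g) =
          {x * f 0, x * f 1, x * f 3, x * f 4} ∧
        (Set.range fun g : Fin 5 => x * f g).ncard = 4) ∧
      (¬(∃ (u : List (Fin 5)) (i : ℕ),
            w = u ++ (0 : Fin 5) :: List.replicate i (1 : Fin 5)) →
        (Set.range fun g : Fin 5 => x * f g).ncard = 5)) := by
  refine ⟨hpres.1, fun _ _ _ _ => MX.eq_of_mul_eq_mul hpres, MX.mul_ne_one hpres, ?_⟩
  rintro x w - rfl
  refine ⟨fun ⟨u, i, hw⟩ => ?_, fun hw => ?_⟩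
  · have hst : MX.state none w = some i := (MX.state_eq_some_iff w i).2 ⟨u, hw⟩
    refine ⟨?_, ?_⟩
    · rw [MX.range_mul_eq_image_range_out hpres, hst, MX.range_out_some]
      simp [Set.image_insert_eq]
    · rw [MX.ncard_range_mul hpres, hst, MX.range_out_some]
      simp [Set.ncard_insert_of_notMem]
  · have hst : MX.state none w = none := Option.eq_none_iff_forall_ne_some.2 fun i h =>
      hw (((MX.state_eq_some_iff w i).1 h).imp fun _ hu => ⟨i, hu⟩)
    rw [MX.ncard_range_mul hpres, hst, MX.range_out_none]
    simp
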